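/- arXiv:1804.10305 — 4 statements merged into one kernel-verified Lean document; each statement's English description precedes it below -/
import Mathlib

section
/- Every Lie algebra automorphism Φ of the Heisenberg Lie algebra V_H = V_W ⊕ V_Z has the form Φ(W_w) = W_{λSw} + Z_{uᵀw}, Φ(Z_z) = Z_{ελ²z} for some λ > 0, u ∈ ℝ²ⁿ, ε ∈ {±1}, and S ∈ GL(2n,ℝ) satisfying Sᵀ𝒥S = ε𝒥. -/
open Matrix

/-- The standard symplectic matrix 𝒥 = [[0, −Iₙ],[Iₙ, 0]]. -/
noncomputable def Jmat (n : ℕ) : Matrix (Fin n ⊕ Fin n) (Fin n ⊕ Fin n) ℝ :=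
  Matrix.fromBlocks 0 (-1) 1 0

/-- The symplectic form ⟦w, w̃⟧ = wᵀ 𝒥 w̃. -/
noncomputable def sympl (n : ℕ) (w w' : Fin n ⊕ Fin n → ℝ) : ℝ :=
  w ⬝ᵥ (Jmat n) *ᵥ w'

/-- The bracket of the Heisenberg Lie algebra V_H = V_W ⊕ V_Z. -/
noncomputable def heisBracket (n : ℕ) (a b : (Fin n ⊕ Fin n → ℝ) × ℝ) :
    (Fin n ⊕ Fin n → ℝ) × ℝ :=
  (0, sympl n a.1 b.1)

lemma bilin_ext {ι : Type*} [Fintype ι] [DecidableEq ι] (A B : Matrix ι ι ℝ)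
    (h : ∀ w w', w ⬝ᵥ A *ᵥ w' = w ⬝ᵥ B *ᵥ w') : A = B := by
  ext i j
  have := h (Pi.single i 1) (Pi.single j 1)
  simpa [Matrix.mulVec_single, single_dotProduct] using this

lemma transp_dot {ι : Type*} [Fintype ι] (M : Matrix ι ι ℝ) (w x : ι → ℝ) :
    w ⬝ᵥ (Mᵀ *ᵥ x) = (M *ᵥ w) ⬝ᵥ x := by
  rw [Matrix.dotProduct_mulVec, Matrix.vecMul_transpose]

/-- Every Lie algebra automorphism of V_H has the form
Φ(W_w + Z_z) = W_{λSw} + Z_{uᵀw + ελ²z} with λ > 0, ε = ±1 and Sᵀ𝒥S = ε𝒥. -/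
theorem heisenberg_algebra_automorphism_form (n : ℕ)
    (Φ : (Fin n ⊕ Fin n → ℝ) × ℝ → (Fin n ⊕ Fin n → ℝ) × ℝ)
    (hlin : IsLinearMap ℝ Φ) (hbij : Function.Bijective Φ)
    (hbr : ∀ a b, Φ (heisBracket n a b) = heisBracket n (Φ a) (Φ b)) :
    ∃ (lam : ℝ) (u : Fin n ⊕ Fin n → ℝ) (ε : ℝ)
      (S : Matrix (Fin n ⊕ Fin n) (Fin n ⊕ Fin n) ℝ),
      0 < lam ∧ (ε = 1 ∨ ε = -1) ∧ IsUnit S.det ∧ Sᵀ * Jmat n * S = ε • Jmat n ∧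
      ∀ a : (Fin n ⊕ Fin n → ℝ) × ℝ,
        Φ a = (lam • (S *ᵥ a.1), u ⬝ᵥ a.1 + ε * lam ^ 2 * a.2) := by
  set ΦL : ((Fin n ⊕ Fin n → ℝ) × ℝ) →ₗ[ℝ] ((Fin n ⊕ Fin n → ℝ) × ℝ) :=
    IsLinearMap.mk' Φ hlin with hΦL
  set L1 : (Fin n ⊕ Fin n → ℝ) →ₗ[ℝ] (Fin n ⊕ Fin n → ℝ) :=
    (LinearMap.fst ℝ _ ℝ).comp (ΦL.comp (LinearMap.inl ℝ _ ℝ)) with hL1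
  set uL : (Fin n ⊕ Fin n → ℝ) →ₗ[ℝ] ℝ :=
    (LinearMap.snd ℝ _ ℝ).comp (ΦL.comp (LinearMap.inl ℝ _ ℝ)) with huL
  have hL1a : ∀ w, L1 w = (Φ (w, 0)).1 := fun w => rfl
  have huLa : ∀ w, uL w = (Φ (w, 0)).2 := fun w => rfl
  set v : Fin n ⊕ Fin n → ℝ := (Φ (0, 1)).1 with hv
  set μ : ℝ := (Φ (0, 1)).2 with hμ
  -- decomposition of Φ
  have hdec : ∀ (w : Fin n ⊕ Fin n → ℝ) (z : ℝ),
      Φ (w, z) = (L1 w + z • v, uL w + z * μ) := by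
    intro w z
    have h1 : ((w, z) : (Fin n ⊕ Fin n → ℝ) × ℝ) = (w, 0) + z • (0, 1) := by
      ext <;> simp
    rw [h1, hlin.map_add, hlin.map_smul]
    ext <;> simp [hL1a, huLa, hv, hμ, mul_comm]
  have hΦ0 : ∀ s : ℝ, Φ (0, s) = (s • v, s * μ) := by
    intro s
    rw [hdec]
    simp
  -- v = 0
  have hv0 : v = 0 := by
    funext j
    have i : Fin n := j.elim id id
    have hs : sympl n (Pi.single (Sum.inl i) 1) (Pi.single (Sum.inr i) 1) = -1 := by
      simp [sympl, Jmat, single_dotProduct, Matrix.fromBlocks_apply₁₂,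
        Matrix.one_apply_eq]
    have hb := hbr (Pi.single (Sum.inl i) 1, 0) (Pi.single (Sum.inr i) 1, 0)
    have h2 : ((-1 : ℝ) • v) = 0 := by
      simpa [heisBracket, hs, hΦ0] using congrArg Prod.fst hb
    have h3 : v = 0 := (smul_eq_zero.mp h2).resolve_left (by norm_num)
    exact congrFun h3 j
  -- μ ≠ 0
  have hμ0 : μ ≠ 0 := by
    intro h
    have h1 : Φ (0, 1) = Φ 0 := by
      rw [hlin.map_zero, hΦ0 1, hv0, h]
      simp
    have := hbij.1 h1
    simpa using congrArg Prod.snd this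
  -- matrix of L1
  set M : Matrix (Fin n ⊕ Fin n) (Fin n ⊕ Fin n) ℝ := LinearMap.toMatrix' L1 with hM
  have hMv : ∀ w, M *ᵥ w = L1 w := by
    intro w
    rw [← Matrix.toLin'_apply, hM, Matrix.toLin'_toMatrix']
  -- M is invertible
  have hMsurj : Function.Surjective M.mulVec := by
    intro y
    obtain ⟨⟨w, z⟩, ha⟩ := hbij.2 (y, 0)
    refine ⟨w, ?_⟩
    rw [hdec, hv0] at ha
    have := congrArg Prod.fst ha
    simp only [smul_zero, add_zero] at this
    rw [hMv]
    exact this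
  have hMunit : IsUnit M := Matrix.mulVec_surjective_iff_isUnit.mp hMsurj
  have hMdet : IsUnit M.det := (Matrix.isUnit_iff_isUnit_det M).mp hMunit
  -- symplectic relation
  have hsymp : ∀ w w', μ * sympl n w w' = sympl n (M *ᵥ w) (M *ᵥ w') := by
    intro w w'
    have hb := hbr (w, 0) (w', 0)
    have h2 : sympl n w w' * μ = sympl n (Φ (w, 0)).1 (Φ (w', 0)).1 := by
      simpa [heisBracket, hΦ0] using congrArg Prod.snd hb
    rw [mul_comm, hMv, hMv, hL1a, hL1a]
    exact h2
  have hMJM : Mᵀ * Jmat n * M = μ • Jmat n := by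
    apply bilin_ext
    intro w w'
    have h1 : w ⬝ᵥ (Mᵀ * Jmat n * M) *ᵥ w' = (M *ᵥ w) ⬝ᵥ (Jmat n) *ᵥ (M *ᵥ w') := by
      rw [← Matrix.mulVec_mulVec, ← Matrix.mulVec_mulVec, transp_dot]
    have h2 : w ⬝ᵥ (μ • Jmat n) *ᵥ w' = μ * (w ⬝ᵥ (Jmat n) *ᵥ w') := by
      rw [Matrix.smul_mulVec, dotProduct_smul, smul_eq_mul]
    rw [h1, h2]
    exact (hsymp w w').symm
  -- define lam, eps, S
  set lam : ℝ := Real.sqrt |μ| with hlam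
  have hlampos : 0 < lam := Real.sqrt_pos.mpr (abs_pos.mpr hμ0)
  have hlamne : lam ≠ 0 := ne_of_gt hlampos
  have hlamsq : lam ^ 2 = |μ| := Real.sq_sqrt (abs_nonneg μ)
  set ε : ℝ := if 0 ≤ μ then 1 else -1 with hε
  have hεpm : ε = 1 ∨ ε = -1 := by
    by_cases h : 0 ≤ μ
    · left; rw [hε, if_pos h]
    · right; rw [hε, if_neg h]
  have hεlam : ε * lam ^ 2 = μ := by
    rw [hlamsq]
    by_cases h : 0 ≤ μ
    · rw [hε, if_pos h, one_mul, abs_of_nonneg h]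
    · rw [hε, if_neg h, abs_of_neg (lt_of_not_ge h)]
      ring
  set S : Matrix (Fin n ⊕ Fin n) (Fin n ⊕ Fin n) ℝ := lam⁻¹ • M with hS
  refine ⟨lam, fun j => uL (Pi.single j 1), ε, S, hlampos, hεpm, ?_, ?_, ?_⟩
  · rw [hS, Matrix.det_smul]
    exact (IsUnit.pow _ (isUnit_iff_ne_zero.mpr (inv_ne_zero hlamne))).mul hMdet
  · rw [hS, Matrix.transpose_smul, Matrix.smul_mul, Matrix.smul_mul, Matrix.mul_smul,
      hMJM, smul_smul, smul_smul]
    congr 1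
    rw [← hεlam, pow_two]
    field_simp
  · rintro ⟨w, z⟩
    rw [hdec, hv0]
    have hfst : lam • (S *ᵥ w) = L1 w := by
      rw [hS, Matrix.smul_mulVec, smul_smul, mul_inv_cancel₀ hlamne, one_smul, hMv]
    have hsnd : (fun j => uL (Pi.single j 1)) ⬝ᵥ w = uL w := by
      have hw : w = ∑ j, w j • (Pi.single j 1 : Fin n ⊕ Fin n → ℝ) := by
        funext k
        simp [Finset.sum_apply, Pi.single_apply]
      conv_rhs => rw [hw]
      rw [map_sum]
      simp only [_root_.map_smul, smul_eq_mul]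
      rw [dotProduct]
      exact Finset.sum_congr rfl fun j _ => mul_comm _ _
    simp only [smul_zero, add_zero]
    rw [hfst, hsnd, hεlam]
    congr 1
    ring
end

section
/- Let p = (p₁,p₂) and suppose S ∈ Sp(n,ℝ) satisfies C̃_k = S C_k S⁻¹ for k = 1,2, where C_k = [[B_k,0],[0,p_kIₙ−B_kᵀ]] and C̃_k = [[B̃_k,0],[0,p_kIₙ−B̃_kᵀ]]. Then the linear map Φ : 𝔤_{p,B} → 𝔤_{p,B̃} defined by Φ(M_k) = M̃_k, Φ(W_w) = W_{Sw}, Φ(Z_z) = Z_z is a Lie algebra isomorphism. -/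
open Matrix

/-- C = [[B, 0],[0, p Iₙ − Bᵀ]]. -/
noncomputable def Cmat (n : ℕ) (p : ℝ) (B : Matrix (Fin n) (Fin n) ℝ) :
    Matrix (Fin n ⊕ Fin n) (Fin n ⊕ Fin n) ℝ :=
  Matrix.fromBlocks B 0 0 (p • 1 - Bᵀ)

/-- The bracket of 𝔤_{p,B} on coordinates (s, t, w, z) ↔ s M₁ + t M₂ + W_w + Z_z:
[M_k, W_w] = W_{C_k w}, [M_k, Z_z] = Z_{p_k z}, [W_w, W_w̃] = Z_{⟦w,w̃⟧}. -/
noncomputable def gBr (n : ℕ) (p₁ p₂ : ℝ) (B₁ B₂ : Matrix (Fin n) (Fin n) ℝ)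
    (a b : ℝ × ℝ × (Fin n ⊕ Fin n → ℝ) × ℝ) : ℝ × ℝ × (Fin n ⊕ Fin n → ℝ) × ℝ :=
  (0, 0,
    (a.1 • Cmat n p₁ B₁ + a.2.1 • Cmat n p₂ B₂) *ᵥ b.2.2.1 -
      (b.1 • Cmat n p₁ B₁ + b.2.1 • Cmat n p₂ B₂) *ᵥ a.2.2.1,
    (a.1 * p₁ + a.2.1 * p₂) * b.2.2.2 - (b.1 * p₁ + b.2.1 * p₂) * a.2.2.2 +
      sympl n a.2.2.1 b.2.2.1)

/-!
A symplectic `S` is invertible, so `Φ` is a linear bijection. On brackets, the `W`-component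
of `[a, b]` is a combination of `C_k w`, which `S` carries to the same combination of
`C̃_k (S w)` because `C̃_k S = S C_k`; the `Z`-component only changes through `⟦w, w̃⟧`,
which is invariant since `Sᵀ 𝒥 S = 𝒥`.
-/

namespace Matrix

variable {ι R : Type*} [Fintype ι] [CommRing R]

theorem isUnit_of_transpose_mul_mul_eq [DecidableEq ι] {J S : Matrix ι ι R} (hJ : IsUnit J)
    (hS : Sᵀ * J * S = J) : IsUnit S := by
  have hJdet : IsUnit J.det := (isUnit_iff_isUnit_det J).1 hJ
  have hleft : (J⁻¹ * Sᵀ * J) * S = 1 := by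
    rw [Matrix.mul_assoc, Matrix.mul_assoc, ← Matrix.mul_assoc Sᵀ, hS, nonsing_inv_mul J hJdet]
  exact (isUnit_iff_isUnit_det S).2 (isUnit_det_of_left_inverse hleft)

theorem mulVec_bijective_of_isUnit [DecidableEq ι] {S : Matrix ι ι R} (hS : IsUnit S) :
    Function.Bijective S.mulVec :=
  ⟨mulVec_injective_of_isUnit hS, mulVec_surjective_iff_isUnit.2 hS⟩

theorem dotProduct_mulVec_mulVec_mulVec (S J : Matrix ι ι R) (v w : ι → R) :
    S *ᵥ v ⬝ᵥ J *ᵥ (S *ᵥ w) = v ⬝ᵥ (Sᵀ * J * S) *ᵥ w := by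
  rw [mulVec_mulVec, dotProduct_mulVec, ← vecMul_transpose, vecMul_vecMul,
    ← dotProduct_mulVec, Matrix.mul_assoc]

theorem mul_eq_mul_of_eq_mul_mul_inv [DecidableEq ι] {S C C' : Matrix ι ι R} (hS : IsUnit S)
    (h : C' = S * C * S⁻¹) : C' * S = S * C := by
  rw [h, Matrix.mul_assoc, nonsing_inv_mul S ((isUnit_iff_isUnit_det S).1 hS), Matrix.mul_one]

theorem mulVec_mulVec_eq_of_mul_eq_mul {S C C' : Matrix ι ι R} (h : C' * S = S * C)
    (w : ι → R) : S *ᵥ (C *ᵥ w) = C' *ᵥ (S *ᵥ w) := by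
  rw [mulVec_mulVec, mulVec_mulVec, h]

end Matrix

theorem Jmat_mul_neg_Jmat (n : ℕ) : Jmat n * -Jmat n = 1 := by
  simp [Jmat, fromBlocks_neg, fromBlocks_multiply, ← fromBlocks_one]

theorem isUnit_Jmat (n : ℕ) : IsUnit (Jmat n) :=
  (isUnit_iff_isUnit_det _).2 (isUnit_det_of_right_inverse (Jmat_mul_neg_Jmat n))

theorem sympl_mulVec_mulVec {n : ℕ} {S : Matrix (Fin n ⊕ Fin n) (Fin n ⊕ Fin n) ℝ}
    (hS : Sᵀ * Jmat n * S = Jmat n) (w w' : Fin n ⊕ Fin n → ℝ) :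
    sympl n (S *ᵥ w) (S *ᵥ w') = sympl n w w' := by
  rw [sympl, sympl, dotProduct_mulVec_mulVec_mulVec, hS]

def phi {n : ℕ} (S : Matrix (Fin n ⊕ Fin n) (Fin n ⊕ Fin n) ℝ)
    (a : ℝ × ℝ × (Fin n ⊕ Fin n → ℝ) × ℝ) : ℝ × ℝ × (Fin n ⊕ Fin n → ℝ) × ℝ :=
  (a.1, a.2.1, S *ᵥ a.2.2.1, a.2.2.2)

theorem isLinearMap_phi {n : ℕ} (S : Matrix (Fin n ⊕ Fin n) (Fin n ⊕ Fin n) ℝ) :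
    IsLinearMap ℝ (phi S) :=
  (LinearMap.id.prodMap (LinearMap.id.prodMap ((toLin' S).prodMap LinearMap.id))).isLinear

section phi

variable {n : ℕ} {S : Matrix (Fin n ⊕ Fin n) (Fin n ⊕ Fin n) ℝ}

theorem bijective_phi (hS : IsUnit S) : Function.Bijective (phi S) :=
  Function.bijective_id.prodMap
    (Function.bijective_id.prodMap ((mulVec_bijective_of_isUnit hS).prodMap Function.bijective_id))

theorem phi_gBr {p₁ p₂ : ℝ} {B₁ B₂ B₁' B₂' : Matrix (Fin n) (Fin n) ℝ}
    (hS : Sᵀ * Jmat n * S = Jmat n)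
    (hC₁ : Cmat n p₁ B₁' * S = S * Cmat n p₁ B₁)
    (hC₂ : Cmat n p₂ B₂' * S = S * Cmat n p₂ B₂)
    (a b : ℝ × ℝ × (Fin n ⊕ Fin n → ℝ) × ℝ) :
    phi S (gBr n p₁ p₂ B₁ B₂ a b) = gBr n p₁ p₂ B₁' B₂' (phi S a) (phi S b) := by
  have hC : ∀ s t : ℝ, (s • Cmat n p₁ B₁' + t • Cmat n p₂ B₂') * S =
      S * (s • Cmat n p₁ B₁ + t • Cmat n p₂ B₂) := fun s t => by
    rw [Matrix.add_mul, Matrix.mul_add, Matrix.smul_mul, Matrix.smul_mul, Matrix.mul_smul,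
      Matrix.mul_smul, hC₁, hC₂]
  simp only [phi, gBr, mulVec_sub, mulVec_mulVec_eq_of_mul_eq_mul (hC _ _),
    sympl_mulVec_mulVec hS]

end phi

/-- If S ∈ Sp(n,ℝ) with C̃_k = S C_k S⁻¹ (k = 1,2), then Φ(M_k) = M̃_k, Φ(W_w) = W_{Sw},
Φ(Z_z) = Z_z defines a Lie algebra isomorphism 𝔤_{p,B} → 𝔤_{p,B̃}. -/
theorem intertwined_C_gives_isomorphism (n : ℕ) (p₁ p₂ : ℝ)
    (B₁ B₂ B₁' B₂' : Matrix (Fin n) (Fin n) ℝ)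
    (S : Matrix (Fin n ⊕ Fin n) (Fin n ⊕ Fin n) ℝ)
    (hS : Sᵀ * Jmat n * S = Jmat n)
    (hC₁ : Cmat n p₁ B₁' = S * Cmat n p₁ B₁ * S⁻¹)
    (hC₂ : Cmat n p₂ B₂' = S * Cmat n p₂ B₂ * S⁻¹) :
    IsLinearMap ℝ (fun a : ℝ × ℝ × (Fin n ⊕ Fin n → ℝ) × ℝ =>
        (a.1, a.2.1, S *ᵥ a.2.2.1, a.2.2.2)) ∧
    Function.Bijective (fun a : ℝ × ℝ × (Fin n ⊕ Fin n → ℝ) × ℝ =>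
        (a.1, a.2.1, S *ᵥ a.2.2.1, a.2.2.2)) ∧
    (∀ a b : ℝ × ℝ × (Fin n ⊕ Fin n → ℝ) × ℝ,
      (fun a : ℝ × ℝ × (Fin n ⊕ Fin n → ℝ) × ℝ =>
        (a.1, a.2.1, S *ᵥ a.2.2.1, a.2.2.2)) (gBr n p₁ p₂ B₁ B₂ a b) =
      gBr n p₁ p₂ B₁' B₂' (a.1, a.2.1, S *ᵥ a.2.2.1, a.2.2.2)
        (b.1, b.2.1, S *ᵥ b.2.2.1, b.2.2.2)) := by
  have hSunit : IsUnit S := isUnit_of_transpose_mul_mul_eq (isUnit_Jmat n) hS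
  exact ⟨isLinearMap_phi S, bijective_phi hSunit,
    phi_gBr hS (mul_eq_mul_of_eq_mul_mul_inv hSunit hC₁)
      (mul_eq_mul_of_eq_mul_mul_inv hSunit hC₂)⟩
end

section
/- In the normalized Lie algebra 𝔤_{p,B} with p₂ = 0: if p₁ = 1 then the center of 𝔤_{p,B} is trivial, while if p₁ = 0 then V_Z is contained in the center. Consequently, if two normalized Lie algebras 𝔤_{p,B} and 𝔤_{p̃,B̃} (with B₁,B₂ linearly independent, resp. B̃₁,B̃₂) are isomorphic, then p₁ = p̃₁. -/
open Matrix

lemma JmatJmat (n : ℕ) : Jmat n * Jmat n = -1 := by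
  have h1 : (-1 : Matrix (Fin n ⊕ Fin n) (Fin n ⊕ Fin n) ℝ) =
      Matrix.fromBlocks (-1) 0 0 (-1) := by
    rw [← Matrix.fromBlocks_one]
    ext (i|i) (j|j) <;> simp [Matrix.fromBlocks]
  rw [h1]
  simp [Jmat, Matrix.fromBlocks_multiply]

lemma sympl_all_zero {n : ℕ} {w : Fin n ⊕ Fin n → ℝ}
    (h : ∀ w', sympl n w w' = 0) : w = 0 := by
  funext j
  have := h (-(Jmat n *ᵥ Pi.single j 1))
  rw [sympl, Matrix.mulVec_neg, Matrix.mulVec_mulVec, JmatJmat, Matrix.neg_mulVec,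
    Matrix.one_mulVec, neg_neg] at this
  simpa using this

lemma center_trivial (n : ℕ) (B₁ B₂ : Matrix (Fin n) (Fin n) ℝ)
    (hind : ∀ a b : ℝ, a • B₁ + b • B₂ = 0 → a = 0 ∧ b = 0)
    (a : ℝ × ℝ × (Fin n ⊕ Fin n → ℝ) × ℝ)
    (h : ∀ b, gBr n 1 0 B₁ B₂ a b = 0) : a = 0 := by
  obtain ⟨s, t, w, z⟩ := a
  have hs : s = 0 := by
    have := congrArg (fun x => x.2.2.2) (h (0,0,0,1))
    simpa [gBr, sympl] using this
  have hz : z = 0 := by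
    have := congrArg (fun x => x.2.2.2) (h (1,0,0,0))
    simpa [gBr, sympl] using this
  have hmat : ∀ w', (s • Cmat n 1 B₁ + t • Cmat n 0 B₂) *ᵥ w' = 0 := by
    intro w'
    have := congrArg (fun x => x.2.2.1) (h (0,0,w',0))
    simpa [gBr] using this
  have hC : s • Cmat n 1 B₁ + t • Cmat n 0 B₂ = 0 := by
    ext i j
    have := congrFun (hmat (Pi.single j 1)) i
    simpa [Matrix.mulVec_single] using this
  have hB : s • B₁ + t • B₂ = 0 := by
    ext i j
    have := congrFun (congrFun hC (Sum.inl i)) (Sum.inl j)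
    simpa [Cmat, Matrix.fromBlocks] using this
  obtain ⟨hs', ht⟩ := hind s t hB
  have hw : w = 0 := by
    apply sympl_all_zero
    intro w'
    have := congrArg (fun x => x.2.2.2) (h (0,0,w',0))
    simpa [gBr, hs, hz] using this
  simp [hs, ht, hw, hz]

lemma z_central (n : ℕ) (B₁ B₂ : Matrix (Fin n) (Fin n) ℝ) (z : ℝ)
    (b : ℝ × ℝ × (Fin n ⊕ Fin n → ℝ) × ℝ) :
    gBr n 0 0 B₁ B₂ (0, 0, 0, z) b = 0 := by
  simp [gBr, sympl, Prod.ext_iff]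

/-- For normalized 𝔤_{p,B} (p₂ = 0, p₁ ∈ {0,1}, B₁,B₂ linearly independent):
if p₁ = 1 the center is trivial, if p₁ = 0 then V_Z is central; consequently two
isomorphic normalized algebras have the same p₁. -/
theorem center_and_p_invariance (n : ℕ) (p₁ p₁' : ℝ)
    (B₁ B₂ B₁' B₂' : Matrix (Fin n) (Fin n) ℝ)
    (hp₁ : p₁ = 0 ∨ p₁ = 1) (hp₁' : p₁' = 0 ∨ p₁' = 1)
    (hind : ∀ a b : ℝ, a • B₁ + b • B₂ = 0 → a = 0 ∧ b = 0)
    (hind' : ∀ a b : ℝ, a • B₁' + b • B₂' = 0 → a = 0 ∧ b = 0) :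
    (p₁ = 1 → ∀ a : ℝ × ℝ × (Fin n ⊕ Fin n → ℝ) × ℝ,
      (∀ b, gBr n p₁ 0 B₁ B₂ a b = 0) → a = 0) ∧
    (p₁ = 0 → ∀ (z : ℝ) (b : ℝ × ℝ × (Fin n ⊕ Fin n → ℝ) × ℝ),
      gBr n p₁ 0 B₁ B₂ (0, 0, 0, z) b = 0) ∧
    ((∃ Φ : ℝ × ℝ × (Fin n ⊕ Fin n → ℝ) × ℝ → ℝ × ℝ × (Fin n ⊕ Fin n → ℝ) × ℝ,
        IsLinearMap ℝ Φ ∧ Function.Bijective Φ ∧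
        ∀ a b, Φ (gBr n p₁ 0 B₁ B₂ a b) = gBr n p₁' 0 B₁' B₂' (Φ a) (Φ b)) →
      p₁ = p₁') := by
  refine ⟨?_, ?_, ?_⟩
  · rintro rfl a h
    exact center_trivial n B₁ B₂ hind a h
  · rintro rfl z b
    exact z_central n B₁ B₂ z b
  · rintro ⟨Φ, hlin, hbij, hequiv⟩
    have hΦ0 : Φ 0 = 0 := hlin.map_zero
    have hcne : ((0, 0, 0, 1) : ℝ × ℝ × (Fin n ⊕ Fin n → ℝ) × ℝ) ≠ 0 := by
      intro hc
      have := congrArg (fun x => x.2.2.2) hc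
      simpa using this
    rcases hp₁ with h0 | h1 <;> rcases hp₁' with h0' | h1'
    · rw [h0, h0']
    · -- p₁ = 0, p₁' = 1 : Φ of central element is central
      exfalso
      have hcent : ∀ b', gBr n p₁' 0 B₁' B₂' (Φ (0,0,0,1)) b' = 0 := by
        intro b'
        obtain ⟨b, rfl⟩ := hbij.2 b'
        rw [← hequiv]
        rw [h0, z_central n B₁ B₂ 1 b, hΦ0]
      have := center_trivial n B₁' B₂' hind' _ (h1' ▸ hcent)
      exact hcne (hbij.1 (by rw [this, hΦ0]))
    · -- p₁ = 1, p₁' = 0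
      exfalso
      obtain ⟨a, ha⟩ := hbij.2 (0,0,0,1)
      have hcent : ∀ b, gBr n p₁ 0 B₁ B₂ a b = 0 := by
        intro b
        apply hbij.1
        rw [hequiv, ha, hΦ0, h0', z_central n B₁' B₂' 1 (Φ b)]
      have := center_trivial n B₁ B₂ hind a (h1 ▸ hcent)
      rw [this, hΦ0] at ha
      exact hcne ha.symm
    · rw [h1, h1']
end

section
/- Let M be the space of symmetric (n+1)×(n+1) matrices m(z,x) = [[−z, −xᵀ],[−x, 0]] (z ∈ ℝ, x ∈ ℝⁿ), and let a(t,y) = [[1,0],[−y/2, Iₙ]]·[[e^{−pt/2},0],[0, e^{pt/2}(e^{−Bt})ᵀ]]. Then (a(t,y)⁻¹)ᵀ m(z,x) a(t,y)⁻¹ = m(e^{pt}z + yᵀe^{Bt}x, e^{Bt}x); in particular M is invariant under the action m ↦ (a⁻¹)ᵀ m a⁻¹. -/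
/-!
Write `a(t,y) = L D` with `L` the lower shear by the column `v = -y/2` and
`D = diag(e^{-pt/2}, e^{pt/2} (e^{-Bt})ᵀ)`. Both act on bordered symmetric matrices
`[[c, uᵀ], [u, 0]]` by congruence in closed form: `Lᵀ · L` adds `2 u ⬝ v` to the corner, and
`diag(α, N)ᵀ · diag(α, N)` rescales the corner by `α²` and the border by `u ↦ α Nᵀ u`.
So instead of inverting `a` one checks `aᵀ m(z', x') a = m(z, x)`, where the corner
`e^{pt} z + y ⬝ e^{Bt} x` loses `y ⬝ e^{Bt} x` to the shear and `e^{pt}` to the rescaling,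
and `e^{-Bt} e^{Bt} = 1` restores the border `x`.
-/

open Matrix

/-- m(z,x) = [[−z, −xᵀ],[−x, 0]] ∈ Sym(n+1,ℝ). -/
noncomputable def mMat (n : ℕ) (z : ℝ) (x : Fin n → ℝ) :
    Matrix (Unit ⊕ Fin n) (Unit ⊕ Fin n) ℝ :=
  Matrix.fromBlocks (-z • 1) (fun _ j => -x j) (fun i _ => -x i) 0

/-- a(t,y) = [[1,0],[−y/2, Iₙ]] · [[e^{−pt/2},0],[0, e^{pt/2}(e^{−Bt})ᵀ]]. -/
noncomputable def aMat (n : ℕ) (p₁ p₂ : ℝ) (B₁ B₂ : Matrix (Fin n) (Fin n) ℝ)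
    (t₁ t₂ : ℝ) (y : Fin n → ℝ) : Matrix (Unit ⊕ Fin n) (Unit ⊕ Fin n) ℝ :=
  Matrix.fromBlocks 1 0 (fun i _ => -(1 / 2) * y i) 1 *
    Matrix.fromBlocks (Real.exp (-(p₁ * t₁ + p₂ * t₂) / 2) • 1) 0 0
      (Real.exp ((p₁ * t₁ + p₂ * t₂) / 2) •
        (NormedSpace.exp (-(t₁ • B₁ + t₂ • B₂)))ᵀ)

section Bordered

variable {R ι : Type*} [CommRing R] [Fintype ι] [DecidableEq ι]

def bordered (c : R) (u : ι → R) : Matrix (Unit ⊕ ι) (Unit ⊕ ι) R :=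
  fromBlocks (c • 1) (replicateRow Unit u) (replicateCol Unit u) 0

def lowerShear (v : ι → R) : Matrix (Unit ⊕ ι) (Unit ⊕ ι) R :=
  fromBlocks 1 0 (replicateCol Unit v) 1

theorem lowerShear_transpose_mul_bordered_mul (c : R) (u v : ι → R) :
    (lowerShear v)ᵀ * bordered c u * lowerShear v = bordered (c + 2 * (u ⬝ᵥ v)) u := by
  simp only [lowerShear, bordered, fromBlocks_transpose, fromBlocks_multiply]
  ext (i | i) (j | j) <;>
    simp [replicateRow, replicateCol, Matrix.mul_apply, dotProduct, two_mul, mul_comm, add_assoc]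

theorem fromBlocks_smul_one_transpose_mul_bordered_mul (α c : R) (N : Matrix ι ι R)
    (u : ι → R) :
    (fromBlocks (α • 1) 0 0 N)ᵀ * bordered c u * fromBlocks (α • 1) 0 0 N =
      bordered (α ^ 2 * c) (α • (Nᵀ *ᵥ u)) := by
  simp only [bordered, fromBlocks_transpose, fromBlocks_multiply]
  ext (i | i) (j | j) <;>
    simp [replicateRow, replicateCol, Matrix.mul_apply, mulVec, dotProduct, Finset.mul_sum, sq,
      mul_comm, mul_left_comm]

theorem lowerShear_mul_fromBlocks_transpose_mul_bordered_mul (c α : R) (u v : ι → R)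
    (N : Matrix ι ι R) :
    (lowerShear v * fromBlocks (α • 1) 0 0 N)ᵀ * bordered c u *
        (lowerShear v * fromBlocks (α • 1) 0 0 N) =
      bordered (α ^ 2 * (c + 2 * (u ⬝ᵥ v))) (α • (Nᵀ *ᵥ u)) := by
  rw [transpose_mul, ← fromBlocks_smul_one_transpose_mul_bordered_mul,
    ← lowerShear_transpose_mul_bordered_mul]
  simp only [Matrix.mul_assoc]

theorem inv_transpose_mul_mul_inv_of_transpose_mul_mul {a m m' : Matrix ι ι R}
    (ha : IsUnit a.det) (h : aᵀ * m' * a = m) : (a⁻¹)ᵀ * m * a⁻¹ = m' := by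
  rw [← h, transpose_nonsing_inv]
  calc (aᵀ)⁻¹ * (aᵀ * m' * a) * a⁻¹ = ((aᵀ)⁻¹ * aᵀ) * m' * (a * a⁻¹) := by
        simp only [Matrix.mul_assoc]
    _ = m' := by
      rw [nonsing_inv_mul _ (isUnit_det_transpose _ ha), mul_nonsing_inv _ ha,
        Matrix.one_mul, Matrix.mul_one]

theorem isUnit_det_lowerShear_mul_fromBlocks (v : ι → R) {α : R} {N : Matrix ι ι R}
    (hα : IsUnit α) (hN : IsUnit N.det) :
    IsUnit (lowerShear v * fromBlocks (α • 1) 0 0 N).det := by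
  rw [det_mul, lowerShear, det_fromBlocks_zero₁₂, det_fromBlocks_zero₁₂]
  simp [hα, hN]

end Bordered

theorem mMat_eq_bordered (n : ℕ) (z : ℝ) (x : Fin n → ℝ) : mMat n z x = bordered (-z) (-x) :=
  rfl

theorem aMat_eq_lowerShear_mul (n : ℕ) (p₁ p₂ : ℝ) (B₁ B₂ : Matrix (Fin n) (Fin n) ℝ)
    (t₁ t₂ : ℝ) (y : Fin n → ℝ) :
    aMat n p₁ p₂ B₁ B₂ t₁ t₂ y = lowerShear (-(1 / 2 : ℝ) • y) *
      fromBlocks (Real.exp (-(p₁ * t₁ + p₂ * t₂) / 2) • 1) 0 0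
        (Real.exp ((p₁ * t₁ + p₂ * t₂) / 2) • (NormedSpace.exp (-(t₁ • B₁ + t₂ • B₂)))ᵀ) :=
  rfl

theorem mMat_action_general (n : ℕ) (p₁ p₂ : ℝ) (B₁ B₂ : Matrix (Fin n) (Fin n) ℝ)
    (t₁ t₂ : ℝ) (y : Fin n → ℝ) (z : ℝ) (x : Fin n → ℝ) :
    ((aMat n p₁ p₂ B₁ B₂ t₁ t₂ y)⁻¹)ᵀ * mMat n z x * (aMat n p₁ p₂ B₁ B₂ t₁ t₂ y)⁻¹ =
      mMat n (Real.exp (p₁ * t₁ + p₂ * t₂) * z +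
          y ⬝ᵥ (NormedSpace.exp (t₁ • B₁ + t₂ • B₂) *ᵥ x))
        (NormedSpace.exp (t₁ • B₁ + t₂ • B₂) *ᵥ x) := by
  rw [aMat_eq_lowerShear_mul]
  set q := p₁ * t₁ + p₂ * t₂
  set A := t₁ • B₁ + t₂ • B₂
  have hdet_exp (M : Matrix (Fin n) (Fin n) ℝ) : IsUnit (NormedSpace.exp M).det :=
    (isUnit_iff_isUnit_det _).mp (Matrix.isUnit_exp M)
  have hexp_neg_mul_exp : NormedSpace.exp (-A) * NormedSpace.exp A = 1 := by
    rw [Matrix.exp_neg, nonsing_inv_mul _ (hdet_exp A)]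
  have hN : IsUnit (Real.exp (q / 2) • (NormedSpace.exp (-A))ᵀ).det := by
    rw [det_smul, det_transpose]
    exact ((Real.exp_pos _).ne'.isUnit.pow _).mul (hdet_exp _)
  refine inv_transpose_mul_mul_inv_of_transpose_mul_mul
    (isUnit_det_lowerShear_mul_fromBlocks _ (Real.exp_pos _).ne'.isUnit hN) ?_
  rw [mMat_eq_bordered, mMat_eq_bordered, lowerShear_mul_fromBlocks_transpose_mul_bordered_mul]
  congr 1
  · have hexp : Real.exp (-q / 2) ^ 2 * Real.exp q = 1 := by
      rw [← Real.exp_nat_mul, ← Real.exp_add]; ring_nf; exact Real.exp_zero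
    simp only [dotProduct_smul, neg_dotProduct, dotProduct_comm y]
    linear_combination (-z) * hexp
  · rw [transpose_smul, transpose_transpose, smul_mulVec, mulVec_neg, mulVec_mulVec,
      hexp_neg_mul_exp, one_mulVec, smul_smul, ← Real.exp_add, neg_div,
      neg_add_cancel, Real.exp_zero, one_smul]

/-- (a(t,y)⁻¹)ᵀ m(z,x) a(t,y)⁻¹ = m(e^{pt}z + yᵀe^{Bt}x, e^{Bt}x); in particular the
space M of matrices m(z,x) is invariant under the action m ↦ (a⁻¹)ᵀ m a⁻¹. -/
theorem mMat_action (n : ℕ) (p₁ p₂ : ℝ) (B₁ B₂ : Matrix (Fin n) (Fin n) ℝ)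
    (hB : B₁ * B₂ = B₂ * B₁) (t₁ t₂ : ℝ) (y : Fin n → ℝ) (z : ℝ) (x : Fin n → ℝ) :
    ((aMat n p₁ p₂ B₁ B₂ t₁ t₂ y)⁻¹)ᵀ * mMat n z x * (aMat n p₁ p₂ B₁ B₂ t₁ t₂ y)⁻¹ =
      mMat n (Real.exp (p₁ * t₁ + p₂ * t₂) * z +
          y ⬝ᵥ (NormedSpace.exp (t₁ • B₁ + t₂ • B₂) *ᵥ x))
        (NormedSpace.exp (t₁ • B₁ + t₂ • B₂) *ᵥ x) :=
  mMat_action_general n p₁ p₂ B₁ B₂ t₁ t₂ y z x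
end
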